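/- If every interval system whose overlap graph has clique number ω admits a complete pillar assignment using at most N colours, then the vertex set of every circle graph with clique number ω can be partitioned into at most N parts each inducing a permutation graph. -/

import Mathlib

open scoped Classical

/-- Two open intervals `(a,b)`, `(c,d)` overlap: they intersect and neither
contains the other. -/
def Overlap (I J : ℝ × ℝ) : Prop :=
  (I.1 < J.1 ∧ J.1 < I.2 ∧ I.2 < J.2) ∨ (J.1 < I.1 ∧ I.1 < J.2 ∧ J.2 < I.2)

/-- An interval system: a finite set of open subintervals of `(0,1)` (encoded by
their endpoint pairs) such that no interval has `0` or `1` as an endpoint and no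
two distinct intervals share an endpoint. -/
structure IsIntervalSystem (𝓘 : Finset (ℝ × ℝ)) : Prop where
  mem_Ioo : ∀ I ∈ 𝓘, 0 < I.1 ∧ I.1 < I.2 ∧ I.2 < 1
  ends_distinct : ∀ I ∈ 𝓘, ∀ J ∈ 𝓘, I ≠ J →
    I.1 ≠ J.1 ∧ I.1 ≠ J.2 ∧ I.2 ≠ J.1 ∧ I.2 ≠ J.2

/-- The overlap graph of an interval system. -/
def overlapGraph (𝓘 : Finset (ℝ × ℝ)) : SimpleGraph {I // I ∈ 𝓘} where
  Adj I J := Overlap I.1 J.1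
  symm := by constructor; intro I J h; change Overlap I.1 J.1 at h; change Overlap J.1 I.1; unfold Overlap at *; tauto
  loopless := by constructor; intro I h; change Overlap I.1 I.1 at h; rcases h with ⟨h1, _, _⟩ | ⟨h1, _, _⟩ <;> linarith

/-- A pillar of an interval system: a point of `(0,1)` that is not an endpoint
of any interval. -/
def IsPillar (𝓘 : Finset (ℝ × ℝ)) (p : ℝ) : Prop :=
  0 < p ∧ p < 1 ∧ ∀ I ∈ 𝓘, p ≠ I.1 ∧ p ≠ I.2

/-- A circle graph: a graph isomorphic to the overlap graph of an interval
system. -/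
def IsCircleGraph {V : Type*} (G : SimpleGraph V) : Prop :=
  ∃ 𝓘 : Finset (ℝ × ℝ), IsIntervalSystem 𝓘 ∧ Nonempty (G ≃g overlapGraph 𝓘)

/-- A permutation graph: a graph isomorphic to the overlap graph of an interval
system admitting a pillar contained in every interval. -/
def IsPermutationGraph {V : Type*} (G : SimpleGraph V) : Prop :=
  ∃ 𝓘 : Finset (ℝ × ℝ), IsIntervalSystem 𝓘 ∧
    (∃ p, IsPillar 𝓘 p ∧ ∀ I ∈ 𝓘, I.1 < p ∧ p < I.2) ∧
    Nonempty (G ≃g overlapGraph 𝓘)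

/-- `I` is assigned to pillar `p` with respect to the pillar set `P` and the
total order on `P` given by the ranking function `r` (injective on `P`): `p` is
the `r`-least pillar of `P` contained in `I`. -/
def AssignedTo (P : Finset ℝ) (r : ℝ → ℕ) (I : ℝ × ℝ) (p : ℝ) : Prop :=
  p ∈ P ∧ I.1 < p ∧ p < I.2 ∧
    ∀ q ∈ P, I.1 < q → q < I.2 → q ≠ p → r p < r q

/-- A pillar assignment `(P, ≺, c)`: a finite set of pillars `P`, a total order
on `P` (encoded by a ranking `r` injective on `P`), and a colouring `c` such
that overlapping intervals assigned to pillars of the same colour are assigned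
to the same pillar. -/
structure IsPillarAssignment (𝓘 : Finset (ℝ × ℝ)) (P : Finset ℝ) (r : ℝ → ℕ)
    (c : ℝ → ℕ) : Prop where
  pillar : ∀ p ∈ P, IsPillar 𝓘 p
  inj : Set.InjOn r ↑P
  colour : ∀ I₁ ∈ 𝓘, ∀ I₂ ∈ 𝓘, Overlap I₁ I₂ → ∀ p₁ p₂,
    AssignedTo P r I₁ p₁ → AssignedTo P r I₂ p₂ → c p₁ = c p₂ → p₁ = p₂

/-- A pillar assignment is complete if every interval contains a pillar of `P`. -/
def IsCompleteAssignment (𝓘 : Finset (ℝ × ℝ)) (P : Finset ℝ) : Prop :=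
  ∀ I ∈ 𝓘, ∃ p ∈ P, I.1 < p ∧ p < I.2

/-- `(s,t)` is a segment of the finite set `Q ⊆ (0,1)`: a maximal open
subinterval of `(0,1) \ Q`. -/
def IsSegment (Q : Finset ℝ) (s t : ℝ) : Prop :=
  (s ∈ Q ∨ s = 0) ∧ (t ∈ Q ∨ t = 1) ∧ s < t ∧ ∀ q ∈ Q, q ≤ s ∨ t ≤ q

/-- The `P`-degree of `(p₁,p₂)`: the number of pairs of segments `(S₁, S₂)`
with `S₁` a segment of `P` disjoint from `(p₁,p₂)`, `S₂` a segment of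
`P ∪ {p₁,p₂}` contained in `(p₁,p₂)`, such that some interval of `𝓘` has one
endpoint in `S₁` and one endpoint in `S₂`. -/
noncomputable def PDeg (𝓘 : Finset (ℝ × ℝ)) (P : Finset ℝ) (p₁ p₂ : ℝ) : ℕ :=
  Set.ncard {x : (ℝ × ℝ) × (ℝ × ℝ) |
    IsSegment P x.1.1 x.1.2 ∧ (x.1.2 ≤ p₁ ∨ p₂ ≤ x.1.1) ∧
    IsSegment (P ∪ {p₁, p₂}) x.2.1 x.2.2 ∧ p₁ ≤ x.2.1 ∧ x.2.2 ≤ p₂ ∧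
    ∃ I ∈ 𝓘,
      (x.1.1 < I.1 ∧ I.1 < x.1.2 ∧ x.2.1 < I.2 ∧ I.2 < x.2.2) ∨
      (x.2.1 < I.1 ∧ I.1 < x.2.2 ∧ x.1.1 < I.2 ∧ I.2 < x.1.2)}

/-- The `(P,≺)`-degree of an open interval `(a,b)` contained in a segment of
`P`: the number of pillars `p ∈ P` such that some interval of `𝓘` with an
endpoint in `(a,b)` is assigned to `p`. -/
noncomputable def PrecDeg (𝓘 : Finset (ℝ × ℝ)) (P : Finset ℝ) (r : ℝ → ℕ)
    (a b : ℝ) : ℕ :=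
  Set.ncard {p : ℝ | ∃ I ∈ 𝓘,
    ((a < I.1 ∧ I.1 < b) ∨ (a < I.2 ∧ I.2 < b)) ∧ AssignedTo P r I p}

/-- The maximum degree of `(P,≺)` is at most `D`: every segment of `P` has
`(P,≺)`-degree at most `D`. -/
def MaxDegLE (𝓘 : Finset (ℝ × ℝ)) (P : Finset ℝ) (r : ℝ → ℕ) (D : ℕ) : Prop :=
  ∀ s t : ℝ, IsSegment P s t → PrecDeg 𝓘 P r s t ≤ D

/-- A graph is perfect if every induced subgraph has chromatic number equal to
its clique number. -/
def IsPerfect {V : Type*} (G : SimpleGraph V) : Prop :=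
  ∀ s : Set V, (G.induce s).chromaticNumber = ((G.induce s).cliqueNum : ℕ∞)

section Aux

lemma isNClique_image_of_iso {V W : Type*} {G : SimpleGraph V} {H : SimpleGraph W}
    (e : G ≃g H) {n : ℕ} {s : Finset V} (h : G.IsNClique n s) :
    H.IsNClique n (s.image e) := by
  constructor
  · intro a ha b hb hab
    simp only [Finset.coe_image, Set.mem_image, Finset.mem_coe] at ha hb
    obtain ⟨x, hx, rfl⟩ := ha
    obtain ⟨y, hy, rfl⟩ := hb
    have hxy : x ≠ y := fun hxy => hab (by rw [hxy])
    exact e.map_rel_iff.mpr (h.1 hx hy hxy)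
  · rw [Finset.card_image_of_injective _ e.injective, h.2]

lemma cliqueNum_eq_of_iso {V W : Type*} {G : SimpleGraph V} {H : SimpleGraph W}
    (e : G ≃g H) : G.cliqueNum = H.cliqueNum := by
  unfold SimpleGraph.cliqueNum
  congr 1
  ext n
  constructor
  · rintro ⟨s, hs⟩
    exact ⟨s.image e, isNClique_image_of_iso e hs⟩
  · rintro ⟨s, hs⟩
    exact ⟨s.image e.symm, isNClique_image_of_iso e.symm hs⟩

end Aux

/-- If every interval system with overlap graph of clique number `ω` admits a
complete pillar assignment using at most `N` colours, then every circle graph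
with clique number `ω` can be partitioned into at most `N` parts each inducing
a permutation graph. -/
theorem partition_of_complete_assignment (ω N : ℕ)
    (hassign : ∀ 𝓘 : Finset (ℝ × ℝ), IsIntervalSystem 𝓘 →
      (overlapGraph 𝓘).cliqueNum = ω →
      ∃ (P : Finset ℝ) (r : ℝ → ℕ) (c : ℝ → ℕ),
        IsPillarAssignment 𝓘 P r c ∧ IsCompleteAssignment 𝓘 P ∧
        ∀ p ∈ P, c p ∈ Finset.Icc 1 N) :
    ∀ {V : Type} [Fintype V] (G : SimpleGraph V), IsCircleGraph G →
      G.cliqueNum = ω →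
      ∃ f : V → Fin N,
        ∀ i : Fin N, IsPermutationGraph (G.induce {v | f v = i}) := by
  intro V _ G hcirc hclique
  obtain ⟨𝓘, hsys, ⟨e⟩⟩ := hcirc
  obtain ⟨P, r, c, hPA, hcomp, hcic⟩ :=
    hassign 𝓘 hsys (by rw [← cliqueNum_eq_of_iso e, hclique])
  classical
  -- every interval of the system has an assigned pillar
  have hex : ∀ I ∈ 𝓘, ∃ p, AssignedTo P r I p := by
    intro I hI
    obtain ⟨p0, hp0P, hp01, hp02⟩ := hcomp I hI
    have hne : (P.filter fun p => I.1 < p ∧ p < I.2).Nonempty :=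
      ⟨p0, Finset.mem_filter.mpr ⟨hp0P, hp01, hp02⟩⟩
    obtain ⟨p, hp, hmin⟩ := Finset.exists_min_image _ r hne
    rw [Finset.mem_filter] at hp
    refine ⟨p, hp.1, hp.2.1, hp.2.2, fun q hq hq1 hq2 hqp => ?_⟩
    have hle := hmin q (Finset.mem_filter.mpr ⟨hq, hq1, hq2⟩)
    rcases lt_or_eq_of_le hle with h | h
    · exact h
    · exact absurd (hPA.inj (Finset.mem_coe.mpr hp.1) (Finset.mem_coe.mpr hq) h).symm hqp
  set pil : ℝ × ℝ → ℝ := fun I => if h : ∃ p, AssignedTo P r I p then h.choose else 0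
    with hpildef
  have hpilA : ∀ I ∈ 𝓘, AssignedTo P r I (pil I) := by
    intro I hI
    rw [hpildef]
    dsimp only
    rw [dif_pos (hex I hI)]
    exact (hex I hI).choose_spec
  set m : ℕ := P.sup r with hmdef
  set M : ℝ := 2 * ((m : ℝ) + 1) with hMdef
  have hM : (0:ℝ) < M := by positivity
  set jf : ℝ × ℝ → ℕ := fun I => r (pil I) with hjdef
  set F : ℝ × ℝ → ℝ × ℝ :=
    fun I => (((jf I : ℝ) + I.1) / M, 1 - ((jf I : ℝ) + 1 - I.2) / M) with hFdef
  have hjle : ∀ I ∈ 𝓘, (jf I : ℝ) ≤ (m : ℝ) := by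
    intro I hI
    exact_mod_cast Finset.le_sup (f := r) ((hpilA I hI).1)
  have hdiv : ∀ a b : ℝ, a / M < b / M ↔ a < b := fun a b => div_lt_div_iff_of_pos_right hM
  -- basic position facts
  have hA : ∀ I ∈ 𝓘, 0 < (F I).1 ∧ (F I).1 < 1/2 ∧ 1/2 < (F I).2 ∧ (F I).2 < 1 := by
    intro I hI
    obtain ⟨h1, h2, h3⟩ := hsys.mem_Ioo I hI
    have hj := hjle I hI
    have hj0 : (0:ℝ) ≤ (jf I : ℝ) := Nat.cast_nonneg _
    refine ⟨div_pos (by linarith) hM, ?_, ?_, ?_⟩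
    · rw [show (F I).1 = ((jf I : ℝ) + I.1) / M from rfl, div_lt_iff₀ hM]
      linarith
    · have h4 : ((jf I : ℝ) + 1 - I.2) / M < 1/2 := by
        rw [div_lt_iff₀ hM]; linarith
      show (1:ℝ)/2 < 1 - ((jf I : ℝ) + 1 - I.2) / M
      linarith
    · have h4 : 0 < ((jf I : ℝ) + 1 - I.2) / M := div_pos (by linarith) hM
      show 1 - ((jf I : ℝ) + 1 - I.2) / M < 1
      linarith
  -- nesting of distinct bands
  have hnest : ∀ I ∈ 𝓘, ∀ J ∈ 𝓘, jf I < jf J → (F I).1 < (F J).1 ∧ (F J).2 < (F I).2 := by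
    intro I hI J hJ hlt
    obtain ⟨hI1, hI2, hI3⟩ := hsys.mem_Ioo I hI
    obtain ⟨hJ1, hJ2, hJ3⟩ := hsys.mem_Ioo J hJ
    have hcast : (jf I : ℝ) + 1 ≤ (jf J : ℝ) := by exact_mod_cast hlt
    constructor
    · exact (hdiv _ _).mpr (by linarith)
    · have h5 : ((jf I : ℝ) + 1 - I.2) / M < ((jf J : ℝ) + 1 - J.2) / M :=
        (hdiv _ _).mpr (by linarith)
      show 1 - ((jf J : ℝ) + 1 - J.2) / M < 1 - ((jf I : ℝ) + 1 - I.2) / M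
      linarith
  -- endpoints of images are pairwise distinct
  have hC : ∀ I ∈ 𝓘, ∀ J ∈ 𝓘, I ≠ J →
      (F I).1 ≠ (F J).1 ∧ (F I).1 ≠ (F J).2 ∧ (F I).2 ≠ (F J).1 ∧ (F I).2 ≠ (F J).2 := by
    intro I hI J hJ hne
    obtain ⟨hd1, hd2, hd3, hd4⟩ := hsys.ends_distinct I hI J hJ hne
    obtain ⟨hAI1, hAI2, hAI3, hAI4⟩ := hA I hI
    obtain ⟨hAJ1, hAJ2, hAJ3, hAJ4⟩ := hA J hJ
    refine ⟨?_, ne_of_lt (lt_trans hAI2 hAJ3), ne_of_gt (lt_trans hAJ2 hAI3), ?_⟩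
    · rcases lt_trichotomy (jf I) (jf J) with h | h | h
      · exact ne_of_lt (hnest I hI J hJ h).1
      · intro hcontra
        have h2 : (jf I : ℝ) + I.1 = (jf J : ℝ) + J.1 := by
          have h' := congrArg (fun x => x * M)
            (show ((jf I : ℝ) + I.1) / M = ((jf J : ℝ) + J.1) / M from hcontra)
          simpa [div_mul_cancel₀, hM.ne'] using h'
        have h3 : (jf I : ℝ) = (jf J : ℝ) := by exact_mod_cast h
        exact hd1 (by linarith)
      · exact (ne_of_lt (hnest J hJ I hI h).1).symm
    · rcases lt_trichotomy (jf I) (jf J) with h | h | h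
      · exact (ne_of_lt (hnest I hI J hJ h).2).symm
      · intro hcontra
        have hcontra' : ((jf I : ℝ) + 1 - I.2) / M = ((jf J : ℝ) + 1 - J.2) / M := by
          have : (1:ℝ) - ((jf I : ℝ) + 1 - I.2) / M = 1 - ((jf J : ℝ) + 1 - J.2) / M :=
            hcontra
          linarith
        have h2 : (jf I : ℝ) + 1 - I.2 = (jf J : ℝ) + 1 - J.2 := by
          have h' := congrArg (fun x => x * M) hcontra'
          simpa [div_mul_cancel₀, hM.ne'] using h'
        have h3 : (jf I : ℝ) = (jf J : ℝ) := by exact_mod_cast h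
        exact hd4 (by linarith)
      · exact ne_of_lt (hnest J hJ I hI h).2
  -- overlap is preserved within a colour class
  have hD : ∀ I ∈ 𝓘, ∀ J ∈ 𝓘, c (pil I) = c (pil J) →
      (Overlap I J ↔ Overlap (F I) (F J)) := by
    intro I hI J hJ hcc
    obtain ⟨hPI, hI1p, hI2p, _⟩ := hpilA I hI
    obtain ⟨hPJ, hJ1p, hJ2p, _⟩ := hpilA J hJ
    obtain ⟨hAI1, hAI2, hAI3, hAI4⟩ := hA I hI
    obtain ⟨hAJ1, hAJ2, hAJ3, hAJ4⟩ := hA J hJ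
    by_cases hpp : pil I = pil J
    · have hj : (jf I : ℝ) = (jf J : ℝ) := by rw [hjdef]; dsimp only; rw [hpp]
      have hL : (F I).1 < (F J).1 ↔ I.1 < J.1 := by
        rw [show (F I).1 = ((jf I : ℝ) + I.1) / M from rfl,
          show (F J).1 = ((jf J : ℝ) + J.1) / M from rfl, hdiv]
        constructor <;> intro <;> linarith
      have hL' : (F J).1 < (F I).1 ↔ J.1 < I.1 := by
        rw [show (F I).1 = ((jf I : ℝ) + I.1) / M from rfl,
          show (F J).1 = ((jf J : ℝ) + J.1) / M from rfl, hdiv]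
        constructor <;> intro <;> linarith
      have hR : (F I).2 < (F J).2 ↔ I.2 < J.2 := by
        rw [show (F I).2 = 1 - ((jf I : ℝ) + 1 - I.2) / M from rfl,
          show (F J).2 = 1 - ((jf J : ℝ) + 1 - J.2) / M from rfl]
        rw [sub_lt_sub_iff_left, hdiv]
        constructor <;> intro <;> linarith
      have hR' : (F J).2 < (F I).2 ↔ J.2 < I.2 := by
        rw [show (F I).2 = 1 - ((jf I : ℝ) + 1 - I.2) / M from rfl,
          show (F J).2 = 1 - ((jf J : ℝ) + 1 - J.2) / M from rfl]
        rw [sub_lt_sub_iff_left, hdiv]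
        constructor <;> intro <;> linarith
      have hJ1p' : J.1 < pil I := by rw [hpp]; exact hJ1p
      have hJ2p' : pil I < J.2 := by rw [hpp]; exact hJ2p
      constructor
      · rintro (⟨a, b, c'⟩ | ⟨a, b, c'⟩)
        · exact Or.inl ⟨hL.mpr a, lt_trans hAJ2 hAI3, hR.mpr c'⟩
        · exact Or.inr ⟨hL'.mpr a, lt_trans hAI2 hAJ3, hR'.mpr c'⟩
      · rintro (⟨a, b, c'⟩ | ⟨a, b, c'⟩)
        · exact Or.inl ⟨hL.mp a, lt_trans hJ1p' hI2p, hR.mp c'⟩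
        · exact Or.inr ⟨hL'.mp a, lt_trans hI1p hJ2p', hR'.mp c'⟩
    · have hnov : ¬ Overlap I J := fun hov =>
        hpp (hPA.colour I hI J hJ hov _ _ (hpilA I hI) (hpilA J hJ) hcc)
      have hjne : jf I ≠ jf J := by
        intro h
        exact hpp (hPA.inj (Finset.mem_coe.mpr hPI) (Finset.mem_coe.mpr hPJ) h)
      have hnovF : ¬ Overlap (F I) (F J) := by
        rcases hjne.lt_or_gt with h | h
        · obtain ⟨h1, h2⟩ := hnest I hI J hJ h
          rintro (⟨a, b, c'⟩ | ⟨a, b, c'⟩)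
          · exact lt_asymm h2 c'
          · exact lt_asymm h1 a
        · obtain ⟨h1, h2⟩ := hnest J hJ I hI h
          rintro (⟨a, b, c'⟩ | ⟨a, b, c'⟩)
          · exact lt_asymm h1 a
          · exact lt_asymm h2 c'
      exact iff_of_false hnov hnovF
  -- the interval of a vertex
  set ι : V → ℝ × ℝ := fun v => ((e v : {I // I ∈ 𝓘}) : ℝ × ℝ) with hιdef
  have hιmem : ∀ v, ι v ∈ 𝓘 := fun v => (e v).2
  have hιinj : Function.Injective ι := fun u v h =>
    e.toEquiv.injective (Subtype.ext h)
  have hc1 : ∀ v, 1 ≤ c (pil (ι v)) ∧ c (pil (ι v)) ≤ N := by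
    intro v
    have := hcic (pil (ι v)) (hpilA _ (hιmem v)).1
    rwa [Finset.mem_Icc] at this
  have hcb : ∀ v, c (pil (ι v)) - 1 < N := by
    intro v
    have := hc1 v
    omega
  refine ⟨fun v => ⟨c (pil (ι v)) - 1, hcb v⟩, ?_⟩
  intro i
  set 𝓙 : Finset (ℝ × ℝ) := Finset.image (fun v => F (ι v))
    (Finset.univ.filter fun v => (⟨c (pil (ι v)) - 1, hcb v⟩ : Fin N) = i) with h𝓙def
  have hmem𝓙 : ∀ X, X ∈ 𝓙 ↔
      ∃ v, (⟨c (pil (ι v)) - 1, hcb v⟩ : Fin N) = i ∧ F (ι v) = X := by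
    intro X
    rw [h𝓙def]
    simp [Finset.mem_image, Finset.mem_filter]
  have hceq : ∀ u v : V, (⟨c (pil (ι u)) - 1, hcb u⟩ : Fin N) = i →
      (⟨c (pil (ι v)) - 1, hcb v⟩ : Fin N) = i → c (pil (ι u)) = c (pil (ι v)) := by
    intro u v hu hv
    have h1 := congrArg Fin.val hu
    have h2 := congrArg Fin.val hv
    simp only at h1 h2
    have := hc1 u
    have := hc1 v
    omega
  refine ⟨𝓙, ⟨?_, ?_⟩, ⟨1/2, ⟨by norm_num, by norm_num, ?_⟩, ?_⟩, ⟨?_⟩⟩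
  · -- mem_Ioo
    intro X hX
    obtain ⟨v, _, rfl⟩ := (hmem𝓙 X).mp hX
    obtain ⟨h1, h2, h3, h4⟩ := hA _ (hιmem v)
    exact ⟨h1, lt_trans h2 h3, h4⟩
  · -- ends_distinct
    intro X hX Y hY hne
    obtain ⟨u, _, rfl⟩ := (hmem𝓙 X).mp hX
    obtain ⟨v, _, rfl⟩ := (hmem𝓙 Y).mp hY
    have hιne : ι u ≠ ι v := fun h => hne (by rw [h])
    exact hC _ (hιmem u) _ (hιmem v) hιne
  · -- pillar: 1/2 is not an endpoint
    intro X hX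
    obtain ⟨v, _, rfl⟩ := (hmem𝓙 X).mp hX
    obtain ⟨_, h2, h3, _⟩ := hA _ (hιmem v)
    exact ⟨ne_of_gt h2, ne_of_lt h3⟩
  · -- 1/2 is in every interval
    intro X hX
    obtain ⟨v, _, rfl⟩ := (hmem𝓙 X).mp hX
    obtain ⟨_, h2, h3, _⟩ := hA _ (hιmem v)
    exact ⟨h2, h3⟩
  · -- the isomorphism
    have hg : ∀ u : {v : V // v ∈ {v | (⟨c (pil (ι v)) - 1, hcb v⟩ : Fin N) = i}},
        F (ι u.1) ∈ 𝓙 := fun u => (hmem𝓙 _).mpr ⟨u.1, u.2, rfl⟩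
    have hbij : Function.Bijective
        (fun u : {v : V // v ∈ {v | (⟨c (pil (ι v)) - 1, hcb v⟩ : Fin N) = i}} =>
          (⟨F (ι u.1), hg u⟩ : {X // X ∈ 𝓙})) := by
      constructor
      · intro u v h
        have hFF : F (ι u.1) = F (ι v.1) := congrArg Subtype.val h
        have hιeq : ι u.1 = ι v.1 := by
          by_contra hne
          exact (hC _ (hιmem u.1) _ (hιmem v.1) hne).1 (congrArg Prod.fst hFF)
        exact Subtype.ext (hιinj hιeq)
      · rintro ⟨X, hX⟩
        obtain ⟨v, hv, rfl⟩ := (hmem𝓙 X).mp hX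
        exact ⟨⟨v, hv⟩, rfl⟩
    refine { toEquiv := Equiv.ofBijective _ hbij, map_rel_iff' := ?_ }
    intro a b
    show Overlap (F (ι a.1)) (F (ι b.1)) ↔ G.Adj a.1 b.1
    have h1 : Overlap (ι a.1) (ι b.1) ↔ G.Adj a.1 b.1 := e.map_rel_iff
    exact ((hD _ (hιmem a.1) _ (hιmem b.1) (hceq a.1 b.1 a.2 b.2)).symm).trans h1
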